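/- For every horizon T ≥ 1 and every sequence of request patterns (x_t)_{t=1}^T, the expected number of cache-configuration switches of the FTPL coded caching policy with learning rates η_t = α√t satisfies C(T) = E_γ[ ∑_{t=1}^{T−1} 1{ s_{t+1}(γ) ≠ s_t(γ) } ] ≤ (3·r_max·(|S|−1) / (2·√(2π)·α)) · ∑_{t=1}^T 1/√t. In particular, since r_max ≤ K, C(T) ≤ (3·K·(|S|−1) / (2·√(2π)·α)) · ∑_{t=1}^T 1/√t = O(√T). -/

import Mathlib

open MeasureTheory ProbabilityTheory

noncomputable section

namespace CodedCaching

/-- The finite set of feasible cache configurations: binary vectors (entries in `{0,1}`)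
with at least `M` ones. -/
def configs (N M : ℕ) : Finset (Fin N → ℕ) :=
  (Fintype.piFinset fun _ : Fin N => Finset.range 2).filter fun s => M ≤ ∑ i, s i

/-- The finite set of request patterns: `ℕ`-valued vectors whose entries sum to `K`. -/
def requests (N K : ℕ) : Finset (Fin N → ℕ) :=
  (Fintype.piFinset fun _ : Fin N => Finset.range (K + 1)).filter fun x => ∑ i, x i = K

/-- The truncated request vector `y = min(x, 1_N)`, viewed as a real vector. -/
def trunc {N : ℕ} (x : Fin N → ℕ) : Fin N → ℝ := fun i => (min (x i) 1 : ℕ)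

/-- The coded part of the expected transmission rate:
`(⟨s,1⟩/M − 1)·(1 − (1 − M/⟨s,1⟩)^⟨x,s⟩)`. -/
def codedRate {N : ℕ} (M : ℕ) (s x : Fin N → ℕ) : ℝ :=
  ((∑ i, (s i : ℝ)) / M - 1) *
    (1 - (1 - (M : ℝ) / ∑ i, (s i : ℝ)) ^ (∑ i, x i * s i))

/-- The expected transmission rate `K(s,x) = ⟨1_N − s, y⟩ + codedRate`. -/
def rate {N : ℕ} (M : ℕ) (s x : Fin N → ℕ) : ℝ :=
  (∑ i, (1 - (s i : ℝ)) * trunc x i) + codedRate M s x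

/-- The common component value of the vector `f(x,s)`:
`(1/M)·(1 − (1 − M/⟨s,1⟩)^⟨x,s⟩)`. -/
def fcomp {N : ℕ} (M : ℕ) (x s : Fin N → ℕ) : ℝ :=
  (1 / M) * (1 - (1 - (M : ℝ) / ∑ i, (s i : ℝ)) ^ (∑ i, x i * s i))

/-- `r_max`: the maximum of the rate over feasible configurations and request patterns. -/
def rmax (N K M : ℕ) : ℝ :=
  sSup {r : ℝ | ∃ s ∈ configs N M, ∃ x ∈ requests N K, r = rate M s x}

/-- `r_max^C`: the maximum of the coded rate over feasible configurations and requests. -/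
def rmaxC (N K M : ℕ) : ℝ :=
  sSup {r : ℝ | ∃ s ∈ configs N M, ∃ x ∈ requests N K, r = codedRate M s x}

/-- The standard Gaussian measure `N(0, I_N)` on `ℝ^N`. -/
def gauss (N : ℕ) : Measure (Fin N → ℝ) :=
  Measure.pi fun _ => gaussianReal 0 1

/-- The Gaussian width constant `G_max = E_γ[max_{s ∈ S} ⟨s, γ⟩]`. -/
def gmax (N M : ℕ) : ℝ :=
  ∫ γ, sSup {r : ℝ | ∃ s ∈ configs N M, r = ∑ i, (s i : ℝ) * γ i} ∂gauss N

/-- The FTPL objective at time `t` with learning rate `η` and perturbation `γ`: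
`⟨ s − (M/N)·1_N , ∑_{i=1}^{t−1} f(x_i, s) − Y_t + η·γ ⟩` where `Y_t = ∑_{i=1}^{t−1} y_i`. -/
def obj {N : ℕ} (M : ℕ) (x : ℕ → Fin N → ℕ) (η : ℝ) (t : ℕ)
    (γ : Fin N → ℝ) (s : Fin N → ℕ) : ℝ :=
  ∑ j, ((s j : ℝ) - (M : ℝ) / N) *
    ((∑ i ∈ Finset.Ico 1 t, fcomp M (x i) s)
      - (∑ i ∈ Finset.Ico 1 t, trunc (x i) j) + η * γ j)

/-- The FTPL policy: a measurable selection `σ t γ` of a minimizer of the perturbed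
cumulative cost over the feasible configurations, for learning-rate schedule `η`. -/
def IsFTPL {N : ℕ} (M : ℕ) (η : ℕ → ℝ) (x : ℕ → Fin N → ℕ)
    (σ : ℕ → (Fin N → ℝ) → Fin N → ℕ) : Prop :=
  (∀ t, Measurable (σ t)) ∧ (∀ t γ, σ t γ ∈ configs N M) ∧
    ∀ t γ, ∀ s ∈ configs N M, obj M x (η t) t γ (σ t γ) ≤ obj M x (η t) t γ s

/-- The regret of a (randomly perturbed) policy `σ` on the request sequence `x`
over horizon `T`, with respect to the best static configuration in hindsight. -/
def regret {N : ℕ} (M : ℕ) (x : ℕ → Fin N → ℕ)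
    (σ : ℕ → (Fin N → ℝ) → Fin N → ℕ) (T : ℕ) : ℝ :=
  (∑ t ∈ Finset.Icc 1 T, ∫ γ, rate M (σ t γ) (x t) ∂gauss N)
    - sInf {r : ℝ | ∃ s ∈ configs N M, r = ∑ t ∈ Finset.Icc 1 T, rate M s (x t)}

/-- The expected number of cache-configuration switches of the policy `σ` up to time `T`. -/
def switchCount {N : ℕ} (σ : ℕ → (Fin N → ℝ) → Fin N → ℕ) (T : ℕ) : ℝ :=
  ∫ γ, (∑ t ∈ Finset.Icc 1 (T - 1), if σ (t + 1) γ = σ t γ then (0 : ℝ) else 1) ∂gauss N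

/-!
After discarding terms that do not depend on the configuration, FTPL at time `t` plays a
minimizer over `S` of `c_t s + ⟨s, γ⟩`, where `c_t` is the cumulative rate divided by `α√t`.
From `t` to `t + 1` the increments `c_{t+1} - c_t` of any two configurations differ by at most
`B_t = 3 r_max / (2α√t)`. If the leader changes, split `S` along a coordinate `j` on which two
configurations differ: either one half changes its leader, or the leadership crosses between
the halves. Given the other coordinates of `γ`, a crossing pins `γ j` to an interval of length at
most `B_t`, of Gaussian mass at most `B_t / √(2π)`, and the crossings for different pairs of
leaders are disjoint. By induction the leader changes with probability at most
`(|S| - 1) B_t / √(2π)`; summing over `t`, and using `∑ 1/√t ≤ 2√T`, gives the bounds.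
-/

open Real Set

section CommonMin

variable {ι : Type*} {f f' g g' : ι → ℝ} {S : Set ι} {r : ι}

def IsUniqueCommonMin (f f' : ι → ℝ) (S : Set ι) (r : ι) : Prop :=
  IsMinOn f S r ∧ IsMinOn f' S r ∧ ∀ p ∈ S, IsMinOn f S p → IsMinOn f' S p → p = r

lemma IsUniqueCommonMin.symm (h : IsUniqueCommonMin f f' S r) : IsUniqueCommonMin f' f S r :=
  ⟨h.2.1, h.1, fun p hp hf' hf => h.2.2 p hp hf hf'⟩

lemma isMinOn_iff_of_eq_add_const {k : ℝ} (hg : ∀ p ∈ S, g p = f p + k) (hr : r ∈ S) :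
    IsMinOn g S r ↔ IsMinOn f S r := by
  simp only [isMinOn_iff]
  refine forall₂_congr fun p hp => ?_
  rw [hg p hp, hg r hr, add_le_add_iff_right]

lemma isUniqueCommonMin_iff_of_eq_add_const {k k' : ℝ} (hg : ∀ p ∈ S, g p = f p + k)
    (hg' : ∀ p ∈ S, g' p = f' p + k') (hr : r ∈ S) :
    IsUniqueCommonMin g g' S r ↔ IsUniqueCommonMin f f' S r := by
  unfold IsUniqueCommonMin
  rw [isMinOn_iff_of_eq_add_const hg hr, isMinOn_iff_of_eq_add_const hg' hr]
  refine and_congr_right' (and_congr_right' (forall₂_congr fun p hp => ?_))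
  rw [isMinOn_iff_of_eq_add_const hg hp, isMinOn_iff_of_eq_add_const hg' hp]

lemma isUniqueCommonMin_of_forall_eq {S : Finset ι}
    (h : ∀ a ∈ S, ∀ b ∈ S, IsMinOn f S a → IsMinOn f' S b → a = b)
    (hr : r ∈ S) (hmin : IsMinOn f S r) : IsUniqueCommonMin f f' S r := by
  obtain ⟨q, hq, hqmin⟩ := S.exists_min_image f' ⟨r, hr⟩
  obtain rfl : r = q := h r hr q hq hmin hqmin
  exact ⟨hmin, hqmin, fun p hp hpf _ => h p hp r hr hpf hqmin⟩

end CommonMin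

instance (N : ℕ) : IsProbabilityMeasure (gauss N) := by
  unfold gauss
  infer_instance

lemma gaussianReal_le_volume (A : Set ℝ) :
    gaussianReal 0 1 A ≤ ENNReal.ofReal (√(2 * π))⁻¹ * volume A := by
  have hpdf (x : ℝ) : gaussianPDF 0 1 x ≤ ENNReal.ofReal (√(2 * π))⁻¹ := by
    refine ENNReal.ofReal_le_ofReal ?_
    rw [gaussianPDFReal]
    have : rexp (-(x - 0) ^ 2 / (2 * ((1 : NNReal) : ℝ))) ≤ 1 :=
      Real.exp_le_one_iff.mpr
        (div_nonpos_of_nonpos_of_nonneg (neg_nonpos.mpr (sq_nonneg _)) (by positivity))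
    simpa using mul_le_mul_of_nonneg_left this (by positivity : 0 ≤ (√(2 * π))⁻¹)
  rw [gaussianReal_apply 0 one_ne_zero, ← setLIntegral_const]
  exact lintegral_mono hpdf

lemma gaussianReal_prod_slab_le {Y : Type*} [MeasurableSpace Y] (ν : Measure Y) [SFinite ν]
    {A : Set Y} (hA : MeasurableSet A) {D : Y → ℝ} (hD : Measurable D) (a b : ℝ) :
    (gaussianReal 0 1).prod ν {q | q.2 ∈ A ∧ q.1 + D q.2 ∈ uIcc a b}
      ≤ ENNReal.ofReal (|b - a| / √(2 * π)) * ν A := by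
  have hmeas : MeasurableSet {q : ℝ × Y | q.2 ∈ A ∧ q.1 + D q.2 ∈ uIcc a b} :=
    (measurable_snd hA).inter
      (measurableSet_uIcc.preimage (measurable_fst.add (hD.comp measurable_snd)))
  have hsection (y : Y) :
      gaussianReal 0 1 {g | (g, y) ∈ {q : ℝ × Y | q.2 ∈ A ∧ q.1 + D q.2 ∈ uIcc a b}}
        ≤ A.indicator (fun _ => ENNReal.ofReal (|b - a| / √(2 * π))) y := by
    by_cases hy : y ∈ A
    · simp only [mem_ofPred_eq, hy, true_and, indicator_of_mem hy]
      calc gaussianReal 0 1 ((fun g => g + D y) ⁻¹' uIcc a b)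
          ≤ ENNReal.ofReal (√(2 * π))⁻¹ * volume ((fun g => g + D y) ⁻¹' uIcc a b) :=
            gaussianReal_le_volume _
        _ = ENNReal.ofReal (|b - a| / √(2 * π)) := by
            rw [measure_preimage_add_right, Real.volume_interval, ← ENNReal.ofReal_mul
              (by positivity), inv_mul_eq_div]
    · simp [hy]
  rw [Measure.prod_apply_symm hmeas, ← lintegral_indicator_const hA]
  exact lintegral_mono hsection

section Leaders

variable {N : ℕ}

def pairing (s : Fin N → ℕ) (γ : Fin N → ℝ) : ℝ := ∑ i, (s i : ℝ) * γ i

lemma pairing_succAbove {n : ℕ} (j : Fin (n + 1)) (s : Fin (n + 1) → ℕ) (γ : Fin (n + 1) → ℝ) :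
    pairing s γ = s j * γ j + pairing (s ∘ j.succAbove) (γ ∘ j.succAbove) :=
  Fin.sum_univ_succAbove _ j

def leaderChangeSet (c c' : (Fin N → ℕ) → ℝ) (S : Finset (Fin N → ℕ)) : Set (Fin N → ℝ) :=
  {γ | ∃ a ∈ S, ∃ b ∈ S,
    IsMinOn (fun p => c p + pairing p γ) S a ∧ IsMinOn (fun p => c' p + pairing p γ) S b ∧ a ≠ b}

/-- Neither `S₀` nor `S₁` changes its leader (`r`, resp. `s`), but the leadership passes between
`r` and `s`. -/
def crossSet (c c' : (Fin N → ℕ) → ℝ) (S₀ S₁ : Finset (Fin N → ℕ)) : Set (Fin N → ℝ) :=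
  {γ | ∃ r ∈ S₀, ∃ s ∈ S₁,
    IsUniqueCommonMin (fun p => c p + pairing p γ) (fun p => c' p + pairing p γ) S₀ r ∧
    IsUniqueCommonMin (fun p => c p + pairing p γ) (fun p => c' p + pairing p γ) S₁ s ∧
    pairing s γ - pairing r γ ∈ uIcc (c r - c s) (c' r - c' s)}

section CrossCell

variable {n : ℕ} (j : Fin (n + 1)) (c c' : (Fin (n + 1) → ℕ) → ℝ)
  (S₀ S₁ : Finset (Fin (n + 1) → ℕ))

/-- `δ` stands for the coordinates of `γ` other than `j`; on `S₀` and `S₁` the coordinate `j` is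
constant, so it does not affect which configurations lead there. -/
def crossCell (r s : Fin (n + 1) → ℕ) : Set (Fin n → ℝ) :=
  {δ | IsUniqueCommonMin (fun p => c p + pairing (p ∘ j.succAbove) δ)
      (fun p => c' p + pairing (p ∘ j.succAbove) δ) S₀ r ∧
    IsUniqueCommonMin (fun p => c p + pairing (p ∘ j.succAbove) δ)
      (fun p => c' p + pairing (p ∘ j.succAbove) δ) S₁ s}

lemma measurable_pairing_comp_succAbove (p : Fin (n + 1) → ℕ) :
    Measurable fun δ : Fin n → ℝ => pairing (p ∘ j.succAbove) δ := by
  simp only [pairing]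
  fun_prop

lemma measurableSet_crossCell (r s : Fin (n + 1) → ℕ) :
    MeasurableSet (crossCell j c c' S₀ S₁ r s) := by
  simp only [crossCell, IsUniqueCommonMin, isMinOn_iff]
  refine Measurable.setOf ?_
  have := measurable_pairing_comp_succAbove j
  fun_prop

lemma sum_measure_crossCell_le_one (μ : Measure (Fin n → ℝ)) [IsProbabilityMeasure μ] :
    ∑ r ∈ S₀, ∑ s ∈ S₁, μ (crossCell j c c' S₀ S₁ r s) ≤ 1 := by
  rw [← Finset.sum_product', ← measure_univ (μ := μ)]
  refine sum_measure_le_measure_univ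
    (fun q _ => (measurableSet_crossCell j c c' S₀ S₁ q.1 q.2).nullMeasurableSet) ?_
  rintro q hq q' - hne
  refine Disjoint.aedisjoint (Set.disjoint_left.mpr ?_)
  rintro δ ⟨hr, hs⟩ ⟨hr', hs'⟩
  rw [Finset.mem_coe, Finset.mem_product] at hq
  exact hne (Prod.ext (hr'.2.2 _ hq.1 hr.1 hr.2.1) (hs'.2.2 _ hq.2 hs.1 hs.2.1))

lemma crossSet_subset_iUnion_crossCell (h₀ : ∀ r ∈ S₀, r j = 0) (h₁ : ∀ s ∈ S₁, s j = 1) :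
    crossSet c c' S₀ S₁ ⊆ ⋃ r ∈ S₀, ⋃ s ∈ S₁,
      MeasurableEquiv.piFinSuccAbove (fun _ => ℝ) j ⁻¹'
        {q | q.2 ∈ crossCell j c c' S₀ S₁ r s ∧
          q.1 + (pairing (s ∘ j.succAbove) q.2 - pairing (r ∘ j.succAbove) q.2)
            ∈ uIcc (c r - c s) (c' r - c' s)} := by
  rintro γ ⟨r, hr, s, hs, hS₀, hS₁, hslab⟩
  have hγ (p : Fin (n + 1) → ℕ) :
      pairing p γ = pairing (p ∘ j.succAbove) (γ ∘ j.succAbove) + p j * γ j := by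
    rw [pairing_succAbove j, add_comm]
  have heγ : MeasurableEquiv.piFinSuccAbove (fun _ => ℝ) j γ = (γ j, γ ∘ j.succAbove) := rfl
  simp only [mem_iUnion, mem_preimage, heγ]
  refine ⟨r, hr, s, hs, ⟨?_, ?_⟩, ?_⟩
  · refine (isUniqueCommonMin_iff_of_eq_add_const (k := 0) (k' := 0) ?_ ?_ hr).mp hS₀ <;>
      · intro p hp
        simp [hγ p, h₀ p hp]
  · refine (isUniqueCommonMin_iff_of_eq_add_const (k := γ j) (k' := γ j) ?_ ?_ hs).mp hS₁ <;>
      · intro p hp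
        simp [hγ p, h₁ p hp, add_assoc]
  · convert hslab using 1
    simp only [hγ, h₀ r hr, h₁ s hs]
    push_cast
    ring

end CrossCell

lemma crossSet_measure_le (j : Fin N) {c c' : (Fin N → ℕ) → ℝ} {B : ℝ}
    {S₀ S₁ : Finset (Fin N → ℕ)} (h₀ : ∀ r ∈ S₀, r j = 0) (h₁ : ∀ s ∈ S₁, s j = 1)
    (hB : ∀ r ∈ S₀, ∀ s ∈ S₁, |(c' r - c r) - (c' s - c s)| ≤ B) :
    gauss N (crossSet c c' S₀ S₁) ≤ ENNReal.ofReal (B / √(2 * π)) := by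
  obtain ⟨n, rfl⟩ : ∃ n, N = n + 1 := Nat.exists_eq_succ_of_ne_zero j.pos.ne'
  have he : MeasurePreserving (MeasurableEquiv.piFinSuccAbove (fun _ => ℝ) j) (gauss (n + 1))
      ((gaussianReal 0 1).prod (gauss n)) :=
    measurePreserving_piFinSuccAbove (fun _ => gaussianReal 0 1) j
  calc gauss (n + 1) (crossSet c c' S₀ S₁)
      ≤ ∑ r ∈ S₀, ∑ s ∈ S₁, gauss (n + 1) (MeasurableEquiv.piFinSuccAbove (fun _ => ℝ) j ⁻¹'
          {q | q.2 ∈ crossCell j c c' S₀ S₁ r s ∧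
            q.1 + (pairing (s ∘ j.succAbove) q.2 - pairing (r ∘ j.succAbove) q.2)
              ∈ uIcc (c r - c s) (c' r - c' s)}) := by
        refine (measure_mono (crossSet_subset_iUnion_crossCell j c c' S₀ S₁ h₀ h₁)).trans
          ((measure_biUnion_finset_le _ _).trans ?_)
        exact Finset.sum_le_sum fun r _ => measure_biUnion_finset_le _ _
    _ ≤ ∑ r ∈ S₀, ∑ s ∈ S₁,
          ENNReal.ofReal (B / √(2 * π)) * gauss n (crossCell j c c' S₀ S₁ r s) := by
        refine Finset.sum_le_sum fun r hr => Finset.sum_le_sum fun s hs => ?_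
        rw [he.measure_preimage_equiv]
        refine (gaussianReal_prod_slab_le _ (measurableSet_crossCell j c c' S₀ S₁ r s)
          ((measurable_pairing_comp_succAbove j s).sub (measurable_pairing_comp_succAbove j r))
          _ _).trans ?_
        gcongr
        rw [show c' r - c' s - (c r - c s) = c' r - c r - (c' s - c s) by ring]
        exact hB r hr s hs
    _ ≤ ENNReal.ofReal (B / √(2 * π)) := by
        simp_rw [← Finset.mul_sum]
        exact mul_le_of_le_one_right' (sum_measure_crossCell_le_one j c c' S₀ S₁ _)

lemma leaderChangeSet_subset (c c' : (Fin N → ℕ) → ℝ) (S : Finset (Fin N → ℕ)) (j : Fin N) :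
    leaderChangeSet c c' S ⊆
      leaderChangeSet c c' {p ∈ S | p j = 0} ∪ leaderChangeSet c c' {p ∈ S | p j ≠ 0} ∪
        crossSet c c' {p ∈ S | p j = 0} {p ∈ S | p j ≠ 0} := by
  rintro γ ⟨a, ha, b, hb, hfa, hfb, hab⟩
  by_contra hγ
  simp only [mem_union, not_or] at hγ
  obtain ⟨⟨h₀, h₁⟩, hcross⟩ := hγ
  simp only [leaderChangeSet, mem_ofPred_eq, not_exists, not_and, not_not] at h₀ h₁
  have hsub₀ : (({p ∈ S | p j = 0} : Finset _) : Set (Fin N → ℕ)) ⊆ S :=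
    Finset.coe_subset.mpr (Finset.filter_subset _ _)
  have hsub₁ : (({p ∈ S | p j ≠ 0} : Finset _) : Set (Fin N → ℕ)) ⊆ S :=
    Finset.coe_subset.mpr (Finset.filter_subset _ _)
  have hlead : c a + pairing a γ ≤ c b + pairing b γ := hfa hb
  have hlead' : c' b + pairing b γ ≤ c' a + pairing a γ := hfb ha
  by_cases haj : a j = 0 <;> by_cases hbj : b j = 0
  · exact hab (h₀ a (by simp [ha, haj]) b (by simp [hb, hbj])
      (hfa.on_subset hsub₀) (hfb.on_subset hsub₀))
  · refine hcross ⟨a, by simp [ha, haj], b, by simp [hb, hbj],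
      isUniqueCommonMin_of_forall_eq h₀ (by simp [ha, haj]) (hfa.on_subset hsub₀),
      (isUniqueCommonMin_of_forall_eq (fun p hp q hq hp' hq' => (h₁ q hq p hp hq' hp').symm)
        (by simp [hb, hbj]) (hfb.on_subset hsub₁)).symm, ?_⟩
    exact Icc_subset_uIcc ⟨by linarith, by linarith⟩
  · refine hcross ⟨b, by simp [hb, hbj], a, by simp [ha, haj],
      (isUniqueCommonMin_of_forall_eq (fun p hp q hq hp' hq' => (h₀ q hq p hp hq' hp').symm)
        (by simp [hb, hbj]) (hfb.on_subset hsub₀)).symm,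
      isUniqueCommonMin_of_forall_eq h₁ (by simp [ha, haj]) (hfa.on_subset hsub₁), ?_⟩
    exact Icc_subset_uIcc' ⟨by linarith, by linarith⟩
  · exact hab (h₁ a (by simp [ha, haj]) b (by simp [hb, hbj])
      (hfa.on_subset hsub₁) (hfb.on_subset hsub₁))

lemma exists_coord_split {S : Finset (Fin N → ℕ)} (hS : ∀ p ∈ S, ∀ i, p i ≤ 1)
    (hcard : 1 < S.card) :
    ∃ j, ({p ∈ S | p j = 0} : Finset _).Nonempty ∧ ({p ∈ S | p j ≠ 0} : Finset _).Nonempty := by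
  obtain ⟨a, ha, b, hb, hab⟩ := Finset.one_lt_card.mp hcard
  obtain ⟨j, hj⟩ := Function.ne_iff.mp hab
  have := hS a ha j
  have := hS b hb j
  refine ⟨j, ?_⟩
  rcases Nat.eq_zero_or_pos (a j) with h | h
  · exact ⟨⟨a, Finset.mem_filter.mpr ⟨ha, h⟩⟩, ⟨b, Finset.mem_filter.mpr ⟨hb, by omega⟩⟩⟩
  · exact ⟨⟨b, Finset.mem_filter.mpr ⟨hb, by omega⟩⟩, ⟨a, Finset.mem_filter.mpr ⟨ha, by omega⟩⟩⟩

theorem leaderChangeSet_measure_le {c c' : (Fin N → ℕ) → ℝ} {B : ℝ} (S : Finset (Fin N → ℕ))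
    (hS : ∀ p ∈ S, ∀ i, p i ≤ 1)
    (hB : ∀ a ∈ S, ∀ b ∈ S, |(c' a - c a) - (c' b - c b)| ≤ B) :
    gauss N (leaderChangeSet c c' S) ≤ (S.card - 1 : ℕ) * ENNReal.ofReal (B / √(2 * π)) := by
  induction S using Finset.strongInduction with
  | H S ih =>
  by_cases hcard : S.card ≤ 1
  · have hempty : leaderChangeSet c c' S = ∅ := by
      refine eq_empty_of_forall_notMem ?_
      rintro γ ⟨a, ha, b, hb, -, -, hab⟩
      exact hab (Finset.card_le_one.mp hcard a ha b hb)
    simp [hempty]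
  obtain ⟨j, ⟨z, hz₀⟩, ⟨o, ho₁⟩⟩ := exists_coord_split hS (not_le.mp hcard)
  set S₀ : Finset (Fin N → ℕ) := {p ∈ S | p j = 0}
  set S₁ : Finset (Fin N → ℕ) := {p ∈ S | p j ≠ 0}
  have hS₀ : S₀ ⊂ S := Finset.filter_ssubset.mpr ⟨o, Finset.mem_filter.mp ho₁⟩
  have hS₁ : S₁ ⊂ S := by
    obtain ⟨hz, hz0⟩ := Finset.mem_filter.mp hz₀
    exact Finset.filter_ssubset.mpr ⟨z, hz, not_not.mpr hz0⟩
  have hsplit : (S₀.card - 1) + (S₁.card - 1) + 1 = S.card - 1 := by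
    have : S₀.card + S₁.card = S.card := Finset.card_filter_add_card_filter_not _
    have := Finset.card_pos.mpr ⟨z, hz₀⟩
    have := Finset.card_pos.mpr ⟨o, ho₁⟩
    omega
  have hcross : gauss N (crossSet c c' S₀ S₁) ≤ ENNReal.ofReal (B / √(2 * π)) := by
    refine crossSet_measure_le j (fun r hr => (Finset.mem_filter.mp hr).2) (fun s hs => ?_)
      (fun r hr s hs => hB r (hS₀.subset hr) s (hS₁.subset hs))
    have := hS s (hS₁.subset hs) j
    have := (Finset.mem_filter.mp hs).2
    omega
  have ih' (T : Finset (Fin N → ℕ)) (hT : T ⊂ S) :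
      gauss N (leaderChangeSet c c' T) ≤ (T.card - 1 : ℕ) * ENNReal.ofReal (B / √(2 * π)) :=
    ih T hT (fun p hp => hS p (hT.subset hp))
      (fun a ha b hb => hB a (hT.subset ha) b (hT.subset hb))
  calc gauss N (leaderChangeSet c c' S)
      ≤ gauss N (leaderChangeSet c c' S₀) + gauss N (leaderChangeSet c c' S₁) +
          gauss N (crossSet c c' S₀ S₁) :=
        (measure_mono (leaderChangeSet_subset c c' S j)).trans
          ((measure_union_le _ _).trans (add_le_add_left (measure_union_le _ _) _))
    _ ≤ (S₀.card - 1 : ℕ) * ENNReal.ofReal (B / √(2 * π)) +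
          (S₁.card - 1 : ℕ) * ENNReal.ofReal (B / √(2 * π)) + ENNReal.ofReal (B / √(2 * π)) := by
        gcongr
        exacts [ih' S₀ hS₀, ih' S₁ hS₁]
    _ = (S.card - 1 : ℕ) * ENNReal.ofReal (B / √(2 * π)) := by
        rw [← hsplit]
        push_cast
        ring

end Leaders

section Rates

variable {N K M : ℕ} {s x : Fin N → ℕ}

lemma le_one_of_mem_configs (hs : s ∈ configs N M) (i : Fin N) : s i ≤ 1 := by
  have := Fintype.mem_piFinset.mp (Finset.mem_filter.mp hs).1 i
  rwa [Finset.mem_range, Nat.lt_succ_iff] at this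

lemma le_sum_of_mem_configs (hs : s ∈ configs N M) : (M : ℝ) ≤ ∑ i, (s i : ℝ) := by
  exact_mod_cast (Finset.mem_filter.mp hs).2

lemma one_mem_configs (hMN : M ≤ N) : (fun _ => 1) ∈ configs N M := by
  simp [configs, hMN]

lemma sum_eq_of_mem_requests (hx : x ∈ requests N K) : ∑ i, (x i : ℝ) = K := by
  exact_mod_cast (Finset.mem_filter.mp hx).2

lemma codedRate_nonneg (hM : 0 < M) (hs : s ∈ configs N M) (x : Fin N → ℕ) :
    0 ≤ codedRate M s x := by
  have hMs := le_sum_of_mem_configs hs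
  have hM' : (0 : ℝ) < M := by exact_mod_cast hM
  have hu : (M : ℝ) / ∑ i, (s i : ℝ) ≤ 1 := div_le_one_of_le₀ hMs (by linarith)
  refine mul_nonneg ?_ (sub_nonneg.mpr (pow_le_one₀ ?_ ?_))
  · rw [sub_nonneg, one_le_div hM']
    exact hMs
  · linarith
  · linarith [show 0 ≤ (M : ℝ) / ∑ i, (s i : ℝ) by positivity]

/-- By Bernoulli's inequality `1 - (1 - u)^e ≤ e·u` with `u = M / ⟨s, 1⟩`. -/
lemma codedRate_le (hM : 0 < M) (hs : s ∈ configs N M) (x : Fin N → ℕ) :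
    codedRate M s x ≤ ∑ i, (x i : ℝ) * s i := by
  set c : ℝ := ∑ i, (s i : ℝ)
  set e : ℕ := ∑ i, x i * s i
  have hMs : (M : ℝ) ≤ c := le_sum_of_mem_configs hs
  have hM' : (0 : ℝ) < M := by exact_mod_cast hM
  have hu : (M : ℝ) / c ≤ 1 := div_le_one_of_le₀ hMs (by linarith)
  have hbern : 1 - (1 - (M : ℝ) / c) ^ e ≤ e * (M / c) := by
    have := one_add_mul_le_pow (a := -((M : ℝ) / c)) (by linarith) e
    rw [← sub_eq_add_neg] at this
    linarith
  have hcoef : 0 ≤ c / M - 1 := by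
    rw [sub_nonneg, one_le_div hM']
    exact hMs
  calc codedRate M s x ≤ (c / M - 1) * (e * (M / c)) := mul_le_mul_of_nonneg_left hbern hcoef
    _ = e * (1 - M / c) := by
        have : c ≠ 0 := by linarith
        field_simp
    _ ≤ e := by
        have : 0 ≤ (M : ℝ) / c := by positivity
        nlinarith [(Nat.cast_nonneg e : (0 : ℝ) ≤ e)]
    _ = ∑ i, (x i : ℝ) * s i := by push_cast [e]; rfl

lemma rate_nonneg (hM : 0 < M) (hs : s ∈ configs N M) (x : Fin N → ℕ) : 0 ≤ rate M s x := by
  refine add_nonneg (Finset.sum_nonneg fun i _ => mul_nonneg ?_ (by simp [trunc]))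
    (codedRate_nonneg hM hs x)
  have : (s i : ℝ) ≤ 1 := by exact_mod_cast le_one_of_mem_configs hs i
  linarith

lemma rate_le (hM : 0 < M) (hs : s ∈ configs N M) (hx : x ∈ requests N K) :
    rate M s x ≤ K := by
  have hterm (i : Fin N) : (1 - (s i : ℝ)) * trunc x i + x i * s i ≤ x i := by
    rcases Nat.le_one_iff_eq_zero_or_eq_one.mp (le_one_of_mem_configs hs i) with h | h <;>
      simp [h, trunc]
  calc rate M s x ≤ ∑ i, (1 - (s i : ℝ)) * trunc x i + ∑ i, (x i : ℝ) * s i :=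
        add_le_add_right (codedRate_le hM hs x) _
    _ ≤ ∑ i, (x i : ℝ) := by
        rw [← Finset.sum_add_distrib]
        exact Finset.sum_le_sum fun i _ => hterm i
    _ = K := sum_eq_of_mem_requests hx

lemma rate_le_rmax (hM : 0 < M) (hs : s ∈ configs N M) (hx : x ∈ requests N K) :
    rate M s x ≤ rmax N K M :=
  le_csSup ⟨K, by rintro _ ⟨s, hs, x, hx, rfl⟩; exact rate_le hM hs hx⟩ ⟨s, hs, x, hx, rfl⟩

lemma rmax_nonneg (hM : 0 < M) : 0 ≤ rmax N K M :=
  Real.sSup_nonneg (by rintro _ ⟨s, hs, x, -, rfl⟩; exact rate_nonneg hM hs x)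

lemma rmax_le (hM : 0 < M) : rmax N K M ≤ K :=
  Real.sSup_le (by rintro _ ⟨s, hs, x, hx, rfl⟩; exact rate_le hM hs hx) K.cast_nonneg

end Rates

section FTPL

variable {N K M : ℕ} {x : ℕ → Fin N → ℕ}

def cumRate (M : ℕ) (x : ℕ → Fin N → ℕ) (s : Fin N → ℕ) (t : ℕ) : ℝ :=
  ∑ i ∈ Finset.Ico 1 t, rate M s (x i)

lemma codedRate_eq_mul_fcomp (hM : M ≠ 0) (s x : Fin N → ℕ) :
    codedRate M s x = (∑ i, (s i : ℝ) - M) * fcomp M x s := by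
  have : (M : ℝ) ≠ 0 := by exact_mod_cast hM
  rw [codedRate, fcomp]
  field_simp

/-- Since `(⟨s, 1⟩ - M) · fcomp = codedRate`, the FTPL objective is the cumulative rate plus the
scaled perturbation, up to a term that does not depend on the configuration. -/
lemma obj_eq_cumRate_add (hN : N ≠ 0) (hM : M ≠ 0) (x : ℕ → Fin N → ℕ) (η : ℝ) (t : ℕ)
    (γ : Fin N → ℝ) :
    ∃ C, ∀ s, obj M x η t γ s = cumRate M x s t + η * pairing s γ + C := by
  set Y : Fin N → ℝ := fun j => ∑ i ∈ Finset.Ico 1 t, trunc (x i) j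
  refine ⟨(M / N : ℝ) * ∑ j, Y j - (M / N : ℝ) * η * ∑ j, γ j - ∑ j, Y j, fun s => ?_⟩
  set F : ℝ := ∑ i ∈ Finset.Ico 1 t, fcomp M (x i) s
  have hN' : (N : ℝ) ≠ 0 := by exact_mod_cast hN
  have hexpand : obj M x η t γ s = (∑ j, (s j : ℝ)) * F - M * F - ∑ j, (s j : ℝ) * Y j
      + η * pairing s γ + ((M / N : ℝ) * ∑ j, Y j - (M / N : ℝ) * η * ∑ j, γ j) := by
    have hterm (j : Fin N) : ((s j : ℝ) - M / N) * (F - Y j + η * γ j) = s j * F - s j * Y j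
        + η * (s j * γ j) - M / N * F + M / N * Y j - M / N * η * γ j := by ring
    change ∑ j, ((s j : ℝ) - M / N) * (F - Y j + η * γ j) = _
    simp only [pairing, hterm, Finset.sum_add_distrib, Finset.sum_sub_distrib,
      ← Finset.sum_mul, ← Finset.mul_sum, Finset.sum_const, Finset.card_univ, Fintype.card_fin,
      nsmul_eq_mul]
    field_simp
    ring
  have hcoded : (∑ j, (s j : ℝ)) * F - M * F
      = cumRate M x s t - ∑ j, Y j + ∑ j, (s j : ℝ) * Y j := by
    have hrate (i : ℕ) : codedRate M s (x i)
        = rate M s (x i) - ∑ j, trunc (x i) j + ∑ j, (s j : ℝ) * trunc (x i) j := by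
      simp only [rate, sub_mul, one_mul, Finset.sum_sub_distrib]
      ring
    calc (∑ j, (s j : ℝ)) * F - M * F = ∑ i ∈ Finset.Ico 1 t, codedRate M s (x i) := by
          rw [← sub_mul, Finset.mul_sum]
          exact Finset.sum_congr rfl fun i _ => (codedRate_eq_mul_fcomp hM s (x i)).symm
      _ = cumRate M x s t - ∑ j, Y j + ∑ j, (s j : ℝ) * Y j := by
          simp only [hrate, cumRate, Y, Finset.sum_add_distrib, Finset.sum_sub_distrib,
            Finset.mul_sum]
          rw [Finset.sum_comm (s := Finset.Ico 1 t), Finset.sum_comm (s := Finset.Ico 1 t)]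
  rw [hexpand, hcoded]
  ring

lemma IsFTPL.isMinOn {η : ℕ → ℝ} {σ : ℕ → (Fin N → ℝ) → Fin N → ℕ} (hσ : IsFTPL M η x σ)
    (hN : N ≠ 0) (hM : M ≠ 0) {t : ℕ} (hη : 0 < η t) (γ : Fin N → ℝ) :
    IsMinOn (fun s => cumRate M x s t / η t + pairing s γ) (configs N M) (σ t γ) := by
  obtain ⟨C, hC⟩ := obj_eq_cumRate_add hN hM x (η t) t γ
  intro p hp
  have hobj := hσ.2.2 t γ p hp
  rw [hC, hC] at hobj
  have hscale (R P : ℝ) : R / η t + P = (R + η t * P) / η t := by field_simp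
  simp only [mem_ofPred_eq, hscale]
  exact div_le_div_of_nonneg_right (by linarith) hη.le

/-- Rescaling the past by `√t / √(t+1)` moves it by at most `r / (2√t)`, the new round by at
most `r / √t`. -/
lemma abs_add_div_sqrt_succ_sub_div_sqrt_le {t D ρ r : ℝ} (ht : 0 < t) (hD : |D| ≤ t * r)
    (hρ : |ρ| ≤ r) : |(D + ρ) / √(t + 1) - D / √t| ≤ 3 / 2 * r / √t := by
  set u := √t
  set v := √(t + 1)
  have hu : 0 < u := Real.sqrt_pos.mpr ht
  have huv : u ≤ v := Real.sqrt_le_sqrt (by linarith)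
  have hu2 : u ^ 2 = t := Real.sq_sqrt ht.le
  have hv2 : v ^ 2 = t + 1 := Real.sq_sqrt (by linarith)
  have hr : 0 ≤ r := (abs_nonneg ρ).trans hρ
  have hv : 0 < v := hu.trans_le huv
  have hshrink : 2 * t * (v - u) ≤ v := by
    have h : 2 * t * (v - u) * (v + u) ≤ v * (v + u) := by nlinarith
    exact le_of_mul_le_mul_right h (add_pos hv hu)
  have hpast : |D / v - D / u| ≤ r / (2 * u) := by
    have h : D / v - D / u = -(D * (v - u) / (u * v)) := by field_simp; ring
    rw [h, abs_neg, abs_div, abs_of_pos (mul_pos hu hv), abs_mul,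
      abs_of_nonneg (sub_nonneg.mpr huv), div_le_div_iff₀ (mul_pos hu hv) (mul_pos two_pos hu)]
    calc |D| * (v - u) * (2 * u) ≤ t * r * (v - u) * (2 * u) := by
          gcongr
      _ = r * u * (2 * t * (v - u)) := by ring
      _ ≤ r * (u * v) := by nlinarith [mul_nonneg hr hu.le]
  have hnew : |ρ / v| ≤ r / u := by
    rw [abs_div, abs_of_pos hv]
    exact div_le_div₀ hr hρ hu huv
  calc |(D + ρ) / v - D / u| = |(D / v - D / u) + ρ / v| := by ring_nf
    _ ≤ r / (2 * u) + r / u := (abs_add_le _ _).trans (add_le_add hpast hnew)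
    _ = 3 / 2 * r / u := by field_simp; ring

lemma abs_rate_sub_rate_le (hM : 0 < M) {a b : Fin N → ℕ} (ha : a ∈ configs N M)
    (hb : b ∈ configs N M) {y : Fin N → ℕ} (hy : y ∈ requests N K) :
    |rate M a y - rate M b y| ≤ rmax N K M :=
  abs_sub_le_of_nonneg_of_le (rate_nonneg hM ha y) (rate_le_rmax hM ha hy)
    (rate_nonneg hM hb y) (rate_le_rmax hM hb hy)

lemma abs_drift_sub_drift_le (hM : 0 < M) (hx : ∀ t, x t ∈ requests N K) {α : ℝ} (hα : 0 < α)
    {t : ℕ} (ht : 1 ≤ t) {a b : Fin N → ℕ} (ha : a ∈ configs N M) (hb : b ∈ configs N M) :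
    |(cumRate M x a (t + 1) / (α * √((t + 1 : ℕ) : ℝ)) - cumRate M x a t / (α * √t)) -
      (cumRate M x b (t + 1) / (α * √((t + 1 : ℕ) : ℝ)) - cumRate M x b t / (α * √t))|
      ≤ 3 / 2 * rmax N K M / (α * √t) := by
  set D := cumRate M x a t - cumRate M x b t
  set ρ := rate M a (x t) - rate M b (x t)
  have hD : |D| ≤ t * rmax N K M := by
    rw [show D = ∑ i ∈ Finset.Ico 1 t, (rate M a (x i) - rate M b (x i)) from
      (Finset.sum_sub_distrib _ _).symm]
    calc |∑ i ∈ Finset.Ico 1 t, (rate M a (x i) - rate M b (x i))|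
        ≤ (Finset.Ico 1 t).card • rmax N K M :=
          (Finset.abs_sum_le_sum_abs _ _).trans
            (Finset.sum_le_card_nsmul _ _ _ fun i _ => abs_rate_sub_rate_le hM ha hb (hx i))
      _ ≤ t * rmax N K M := by
          rw [nsmul_eq_mul, Nat.card_Ico]
          gcongr
          · exact rmax_nonneg hM
          · exact_mod_cast Nat.sub_le t 1
  have hsucc (s : Fin N → ℕ) : cumRate M x s (t + 1) = cumRate M x s t + rate M s (x t) :=
    Finset.sum_Ico_succ_top ht _
  have hst : 0 < √(t : ℝ) := Real.sqrt_pos.mpr (by exact_mod_cast ht)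
  have hst' : 0 < √((t : ℝ) + 1) := Real.sqrt_pos.mpr (by positivity)
  calc _ = |(D + ρ) / √((t : ℝ) + 1) - D / √t| / α := by
        rw [hsucc, hsucc, ← abs_of_pos hα, ← abs_div, abs_of_pos hα]
        push_cast
        congr 1
        field_simp
        ring
    _ ≤ 3 / 2 * rmax N K M / √t / α := by
        gcongr
        exact abs_add_div_sqrt_succ_sub_div_sqrt_le (by exact_mod_cast ht) hD
          (abs_rate_sub_rate_le hM ha hb (hx t))
    _ = 3 / 2 * rmax N K M / (α * √t) := by
        rw [div_div, mul_comm (√_) α]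

lemma switch_measure_le (hM : 0 < M) (hMN : M ≤ N) (hx : ∀ t, x t ∈ requests N K) {α : ℝ}
    (hα : 0 < α) {σ : ℕ → (Fin N → ℝ) → Fin N → ℕ}
    (hσ : IsFTPL M (fun t => α * √t) x σ) {t : ℕ} (ht : 1 ≤ t) :
    gauss N {γ | σ (t + 1) γ ≠ σ t γ} ≤
      ((configs N M).card - 1 : ℕ) * ENNReal.ofReal (3 / 2 * rmax N K M / (α * √t) / √(2 * π)) := by
  have hη {t : ℕ} (ht : 1 ≤ t) : 0 < α * √(t : ℝ) :=
    mul_pos hα (Real.sqrt_pos.mpr (by exact_mod_cast ht))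
  refine (measure_mono ?_).trans (leaderChangeSet_measure_le (configs N M)
    (fun s hs => le_one_of_mem_configs hs)
    fun a ha b hb => abs_drift_sub_drift_le hM hx hα ht ha hb)
  intro γ hγ
  have hN : N ≠ 0 := by omega
  exact ⟨σ t γ, hσ.2.1 t γ, σ (t + 1) γ, hσ.2.1 (t + 1) γ, hσ.isMinOn hN hM.ne' (hη ht) γ,
    hσ.isMinOn hN hM.ne' (hη (Nat.le_succ_of_le ht)) γ, Ne.symm hγ⟩

end FTPL

lemma switchCount_eq {N : ℕ} {σ : ℕ → (Fin N → ℝ) → Fin N → ℕ} (hσ : ∀ t, Measurable (σ t))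
    (T : ℕ) :
    switchCount σ T = ∑ t ∈ Finset.Icc 1 (T - 1), (gauss N).real {γ | σ (t + 1) γ ≠ σ t γ} := by
  have hmeas (t : ℕ) : MeasurableSet {γ | σ (t + 1) γ ≠ σ t γ} :=
    (measurableSet_eq_fun (hσ _) (hσ _)).compl
  have hind (t : ℕ) : (fun γ => if σ (t + 1) γ = σ t γ then (0 : ℝ) else 1) =
      {γ | σ (t + 1) γ ≠ σ t γ}.indicator 1 := by
    ext γ
    by_cases h : σ (t + 1) γ = σ t γ <;> simp [h]
  rw [switchCount,
    integral_finsetSum _ fun t _ => hind t ▸ (integrable_const 1).indicator (hmeas t)]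
  simp_rw [hind, integral_indicator_one (hmeas _)]

lemma sum_Icc_one_div_sqrt_le (T : ℕ) : ∑ t ∈ Finset.Icc 1 T, 1 / √t ≤ 2 * √T := by
  induction T with
  | zero => simp
  | succ T ih =>
    rw [Finset.sum_Icc_succ_top (by omega)]
    have hT : √(T : ℝ) ≤ √((T + 1 : ℕ) : ℝ) := Real.sqrt_le_sqrt (by push_cast; linarith)
    have hpos : 0 < √((T + 1 : ℕ) : ℝ) := Real.sqrt_pos.mpr (by positivity)
    have hsq : √((T + 1 : ℕ) : ℝ) ^ 2 = √(T : ℝ) ^ 2 + 1 := by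
      rw [Real.sq_sqrt (by positivity), Real.sq_sqrt (by positivity)]
      push_cast
      ring
    have hstep : 1 / √((T + 1 : ℕ) : ℝ) ≤ 2 * (√((T + 1 : ℕ) : ℝ) - √T) := by
      rw [div_le_iff₀ hpos]
      nlinarith
    linarith

theorem switchCount_le {N K M : ℕ} (hM : 0 < M) (hMN : M ≤ N) {x : ℕ → Fin N → ℕ}
    (hx : ∀ t, x t ∈ requests N K) {α : ℝ} (hα : 0 < α) {σ : ℕ → (Fin N → ℝ) → Fin N → ℕ}
    (hσ : IsFTPL M (fun t => α * √t) x σ) (T : ℕ) :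
    switchCount σ T ≤ 3 * rmax N K M * (((configs N M).card : ℝ) - 1) / (2 * √(2 * π) * α)
      * ∑ t ∈ Finset.Icc 1 T, 1 / √t := by
  have hcard : 1 ≤ (configs N M).card := Finset.card_pos.mpr ⟨_, one_mem_configs hMN⟩
  have hcard' : (0 : ℝ) ≤ (configs N M).card - 1 := by
    rw [sub_nonneg]
    exact_mod_cast hcard
  have hrmax : 0 ≤ rmax N K M := rmax_nonneg hM
  have hκ : 0 ≤ 3 * rmax N K M * (((configs N M).card : ℝ) - 1) / (2 * √(2 * π) * α) := by
    positivity
  have hterm (t : ℕ) (ht : t ∈ Finset.Icc 1 (T - 1)) : (gauss N).real {γ | σ (t + 1) γ ≠ σ t γ}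
      ≤ 3 * rmax N K M * (((configs N M).card : ℝ) - 1) / (2 * √(2 * π) * α) * (1 / √t) := by
    have ht : 1 ≤ t := (Finset.mem_Icc.mp ht).1
    refine (ENNReal.toReal_mono (by finiteness) (switch_measure_le hM hMN hx hα hσ ht)).trans
      (le_of_eq ?_)
    rw [ENNReal.toReal_mul, ENNReal.toReal_natCast, ENNReal.toReal_ofReal (by positivity),
      Nat.cast_sub hcard, Nat.cast_one]
    field_simp
  rw [switchCount_eq hσ.1, Finset.mul_sum]
  calc _ ≤ ∑ t ∈ Finset.Icc 1 (T - 1),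
        3 * rmax N K M * (((configs N M).card : ℝ) - 1) / (2 * √(2 * π) * α) * (1 / √t) :=
        Finset.sum_le_sum hterm
    _ ≤ _ := Finset.sum_le_sum_of_subset_of_nonneg (Finset.Icc_subset_Icc_right (Nat.sub_le T 1))
        fun t _ _ => by positivity

theorem ftpl_switch_count_general (N K M : ℕ)
    (hM : 0 < M) (hMN : M ≤ N) (α : ℝ) (hα : 0 < α) :
    (∀ x : ℕ → Fin N → ℕ, (∀ t, x t ∈ requests N K) →
      ∀ σ : ℕ → (Fin N → ℝ) → Fin N → ℕ,
        IsFTPL M (fun t => α * Real.sqrt t) x σ →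
      ∀ T : ℕ, 1 ≤ T →
        switchCount σ T ≤
            3 * rmax N K M * (((configs N M).card : ℝ) - 1)
              / (2 * Real.sqrt (2 * Real.pi) * α)
              * (∑ t ∈ Finset.Icc 1 T, 1 / Real.sqrt t)
          ∧ switchCount σ T ≤
              3 * (K : ℝ) * (((configs N M).card : ℝ) - 1)
                / (2 * Real.sqrt (2 * Real.pi) * α)
                * (∑ t ∈ Finset.Icc 1 T, 1 / Real.sqrt t))
    ∧ ∃ C : ℝ, ∀ x : ℕ → Fin N → ℕ, (∀ t, x t ∈ requests N K) →
        ∀ σ : ℕ → (Fin N → ℝ) → Fin N → ℕ,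
          IsFTPL M (fun t => α * Real.sqrt t) x σ →
        ∀ T : ℕ, 1 ≤ T → switchCount σ T ≤ C * Real.sqrt T := by
  have hcard : (1 : ℝ) ≤ (configs N M).card := by
    exact_mod_cast Finset.card_pos.mpr ⟨_, one_mem_configs hMN⟩
  have hsum (T : ℕ) : 0 ≤ ∑ t ∈ Finset.Icc 1 T, 1 / √(t : ℝ) :=
    Finset.sum_nonneg fun _ _ => by positivity
  have hK_bound x (hx : ∀ t, x t ∈ requests N K) σ (hσ : IsFTPL M (fun t => α * √t) x σ) T :
      switchCount σ T ≤ 3 * (K : ℝ) * (((configs N M).card : ℝ) - 1) / (2 * √(2 * π) * α)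
        * ∑ t ∈ Finset.Icc 1 T, 1 / √t := by
    refine (switchCount_le hM hMN hx hα hσ T).trans (mul_le_mul_of_nonneg_right ?_ (hsum T))
    gcongr
    exact rmax_le hM
  refine ⟨fun x hx σ hσ T _ => ⟨switchCount_le hM hMN hx hα hσ T, hK_bound x hx σ hσ T⟩,
    3 * K * (((configs N M).card : ℝ) - 1) / (2 * √(2 * π) * α) * 2, fun x hx σ hσ T _ => ?_⟩
  calc switchCount σ T
      ≤ 3 * K * (((configs N M).card : ℝ) - 1) / (2 * √(2 * π) * α)
          * ∑ t ∈ Finset.Icc 1 T, 1 / √t := hK_bound x hx σ hσ T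
    _ ≤ 3 * K * (((configs N M).card : ℝ) - 1) / (2 * √(2 * π) * α) * (2 * √T) := by
        gcongr
        exact sum_Icc_one_div_sqrt_le T
    _ = _ := by ring

/-- Theorem 2: the expected number of cache-configuration switches of the FTPL policy
with learning rates `η_t = α√t` up to horizon `T` satisfies
`C(T) ≤ (3·r_max·(|S|−1)/(2√(2π)α))·∑_{t=1}^T 1/√t`; in particular, since `r_max ≤ K`,
`C(T) ≤ (3·K·(|S|−1)/(2√(2π)α))·∑_{t=1}^T 1/√t`, which is `O(√T)`. -/
theorem ftpl_switch_count (N K M : ℕ)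
    (hN : 0 < N) (hK : 0 < K) (hM : 0 < M) (hMN : M ≤ N) (α : ℝ) (hα : 0 < α) :
    (∀ x : ℕ → Fin N → ℕ, (∀ t, x t ∈ requests N K) →
      ∀ σ : ℕ → (Fin N → ℝ) → Fin N → ℕ,
        IsFTPL M (fun t => α * Real.sqrt t) x σ →
      ∀ T : ℕ, 1 ≤ T →
        switchCount σ T ≤
            3 * rmax N K M * (((configs N M).card : ℝ) - 1)
              / (2 * Real.sqrt (2 * Real.pi) * α)
              * (∑ t ∈ Finset.Icc 1 T, 1 / Real.sqrt t)
          ∧ switchCount σ T ≤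
              3 * (K : ℝ) * (((configs N M).card : ℝ) - 1)
                / (2 * Real.sqrt (2 * Real.pi) * α)
                * (∑ t ∈ Finset.Icc 1 T, 1 / Real.sqrt t))
    ∧ ∃ C : ℝ, ∀ x : ℕ → Fin N → ℕ, (∀ t, x t ∈ requests N K) →
        ∀ σ : ℕ → (Fin N → ℝ) → Fin N → ℕ,
          IsFTPL M (fun t => α * Real.sqrt t) x σ →
        ∀ T : ℕ, 1 ≤ T → switchCount σ T ≤ C * Real.sqrt T :=
  ftpl_switch_count_general N K M hM hMN α hα

end CodedCaching
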